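/- (Minimum Free Estimate) Let (f_ℓ)_{ℓ=1}^p ⊂ D_wh have pairwise disjoint supports and (x_k)_{k=1}^d be a block sequence in X_wh with ‖x_k‖ ≤ C, such that for all ℓ and k, min supp f_ℓ ∉ ran x_k. Then for every (λ_ℓ)_{ℓ=1}^p in the unit ball of ℓ_2 and all scalars (b_k)_{k=1}^d: ∑_{ℓ=1}^p λ_ℓ f_ℓ(∑_{k=1}^d b_k x_k) ≤ 4C (∑_{k=1}^d b_k^2)^{1/2}. -/

import Mathlib

/-- The first Schreier family: finite sets `F` with `|F| ≤ min F`. -/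
def SchreierOne : Set (Finset ℕ) := {F | ∀ k ∈ F, F.card ≤ k}

/-- The minimum of a finite set of naturals (0 for the empty set). -/
noncomputable def finMin (F : Finset ℕ) : ℕ := sInf {k | k ∈ F}

/-- The convolution `P[Q]` of two families of finite subsets of ℕ:
unions of successive members of `Q` whose minima form a set in `P`. -/
def conv (P Q : Set (Finset ℕ)) : Set (Finset ℕ) :=
  {U | ∃ (d : ℕ) (F : Fin d → Finset ℕ),
    (∀ i, F i ∈ Q) ∧ (∀ i, (F i).Nonempty) ∧
    (∀ i j : Fin d, i < j → ∀ a ∈ F i, ∀ b ∈ F j, a < b) ∧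
    (Finset.univ.image fun i => finMin (F i)) ∈ P ∧
    U = Finset.univ.biUnion F}

/-- The modified convolution `P[Q]_M`: unions of pairwise disjoint members of `Q`
whose minima form a set in `P`. -/
def mconv (P Q : Set (Finset ℕ)) : Set (Finset ℕ) :=
  {U | ∃ (d : ℕ) (F : Fin d → Finset ℕ),
    (∀ i, F i ∈ Q) ∧ (∀ i, (F i).Nonempty) ∧
    (∀ i j : Fin d, i ≠ j → Disjoint (F i) (F j)) ∧
    (Finset.univ.image fun i => finMin (F i)) ∈ P ∧
    U = Finset.univ.biUnion F}

/-- The Schreier families `S_n` (indexed so that `Schreier 1 = S_1`,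
`Schreier (n+1) = S_1[S_n]`). -/
def Schreier : ℕ → Set (Finset ℕ)
  | 0 => {F | F.card ≤ 1}
  | 1 => SchreierOne
  | (n+2) => conv SchreierOne (Schreier (n+1))

/-- The modified Schreier families `S^M_n`. -/
def SchreierM : ℕ → Set (Finset ℕ)
  | 0 => {F | F.card ≤ 1}
  | 1 => SchreierOne
  | (n+2) => mconv SchreierOne (SchreierM (n+1))

/-- The sequence `m_j`: `m_0 = m_1 = 2`, `m_{j+1} = m_j^3`. -/
def mseq : ℕ → ℕ
  | 0 => 2
  | 1 => 2
  | (j+2) => (mseq (j+1)) ^ 3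

/-- `ℓ_j = 3 log_2 m_j + 1`. -/
def lseq (j : ℕ) : ℕ := 3 * Nat.log 2 (mseq j) + 1

/-- The sequence `n_j`: `n_0 = 1` and `n_{j+1} > ℓ_{j+1}(n_j + 1)`. -/
def nseq : ℕ → ℕ
  | 0 => 1
  | (j+1) => lseq (j+1) * (nseq j + 1) + 1

/-- The minimum of the support of an element of `c_00` (0 if empty). -/
noncomputable def minsupp (f : ℕ →₀ ℝ) : ℕ := sInf {k | f k ≠ 0}

/-- The maximum of the support of an element of `c_00` (0 if empty). -/
noncomputable def maxsupp (f : ℕ →₀ ℝ) : ℕ := sSup {k | f k ≠ 0}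

/-- Membership in the set `Σ` of candidate special sequences: a nonempty finite list of
pairs `(E_i, j_i)` with the `E_i` pairwise disjoint nonempty finite sets, the `j_i`
strictly increasing, `j_1 ∈ N_1` and `j_i ∈ N_2` for `i > 1`. -/
def InSigma (N1 N2 : Set ℕ) (l : List (Finset ℕ × ℕ)) : Prop :=
  l ≠ [] ∧
  l.Pairwise (fun a b => Disjoint a.1 b.1) ∧
  l.Chain' (fun a b => a.2 < b.2) ∧
  (∀ a ∈ l.head?, a.2 ∈ N1) ∧
  (∀ a ∈ l.tail, a.2 ∈ N2) ∧
  (∀ a ∈ l, a.1.Nonempty)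

/-- `l` is a `σ`-special sequence: it lies in `Σ` and `σ` of each proper initial
segment gives the next index. -/
def IsSpecial (N1 N2 : Set ℕ) (σ : List (Finset ℕ × ℕ) → ℕ)
    (l : List (Finset ℕ × ℕ)) : Prop :=
  InSigma N1 N2 l ∧
  ∀ (i : ℕ) (h : i + 1 < l.length), σ (l.take (i + 1)) = (l.get ⟨i + 1, h⟩).2

/-- `σ` is an admissible coding: it maps `Σ` into `N_2`, is injective on `Σ`, its values
dominate the indices appearing in the sequence, and it satisfies the growth condition
`m_{2σ(s⌢(E,j))} > m_{2σ(s)}·(max E_last)^2`. -/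
def GoodCoding (N1 N2 : Set ℕ) (σ : List (Finset ℕ × ℕ) → ℕ) : Prop :=
  (∀ l, InSigma N1 N2 l → σ l ∈ N2) ∧
  (∀ l l', InSigma N1 N2 l → InSigma N1 N2 l' → σ l = σ l' → l = l') ∧
  (∀ l, InSigma N1 N2 l → ∀ a ∈ l, a.2 < σ l) ∧
  (∀ (l : List (Finset ℕ × ℕ)) (a : Finset ℕ × ℕ) (h : l ≠ []),
      InSigma N1 N2 l → InSigma N1 N2 (l ++ [a]) →
      mseq (2 * σ l) * (sSup {k | k ∈ (l.getLast h).1}) ^ 2 < mseq (2 * σ (l ++ [a])))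

/-- The norming set `D_wh` of the space `X_wh`, together with weights: the minimal set of
finitely supported functionals containing `±e_k^*` and closed under the modified
`ℓ_2-(1/m_{2j}, S_{n_{2j}})` operations (even case) and under the `ℓ_2` operations on
`S_{n_{2j+1}}` `σ`-special sequences of functionals (odd case). -/
inductive DW (N1 N2 : Set ℕ) (σ : List (Finset ℕ × ℕ) → ℕ) : (ℕ →₀ ℝ) → ℕ → Prop where
  | pos (k : ℕ) : DW N1 N2 σ (Finsupp.single k 1) 0
  | neg (k : ℕ) : DW N1 N2 σ (Finsupp.single k (-1)) 0
  | even (j p : ℕ) (f : Fin p → ℕ →₀ ℝ) (w : Fin p → ℕ) (lam : Fin p → ℝ)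
      (hmem : ∀ i, DW N1 N2 σ (f i) (w i))
      (hdisj : ∀ i i', i ≠ i' → Disjoint (f i).support (f i').support)
      (hallow : (Finset.univ.image fun i => minsupp (f i)) ∈ SchreierM (nseq (2 * j)))
      (hlam : (∑ i, (lam i) ^ 2) ≤ 1) :
      DW N1 N2 σ (((mseq (2 * j) : ℕ) : ℝ)⁻¹ • ∑ i, lam i • f i) (mseq (2 * j))
  | odd (j p : ℕ) (f : Fin p → ℕ →₀ ℝ) (E : Fin p → Finset ℕ) (js : Fin p → ℕ)
      (lam : Fin p → ℝ)
      (hmem : ∀ i, DW N1 N2 σ (f i) (mseq (2 * js i)))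
      (hsupp : ∀ i, (f i).support ⊆ E i)
      (hspec : IsSpecial N1 N2 σ (List.ofFn fun i => (E i, js i)))
      (hallow : (Finset.univ.image fun i => finMin (E i)) ∈ SchreierM (nseq (2 * j + 1)))
      (hbig : ∀ i, 2 * j + 2 < 2 * js i)
      (hlam : (∑ i, (lam i) ^ 2) ≤ 1) :
      DW N1 N2 σ (((mseq (2 * j + 1) : ℕ) : ℝ)⁻¹ • ∑ i, lam i • f i) (mseq (2 * j + 1))

/-- Membership in the norming set `D_wh` (forgetting the weight). -/
def DWh (N1 N2 : Set ℕ) (σ : List (Finset ℕ × ℕ) → ℕ) (f : ℕ →₀ ℝ) : Prop :=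
  ∃ w, DW N1 N2 σ f w

/-- The action of a finitely supported functional on an element of `c_00`. -/
def dotp (f x : ℕ →₀ ℝ) : ℝ := f.sum fun k v => v * x k

/-- The norm of `X_wh` on `c_00`: `‖x‖ = sup {f(x) : f ∈ D_wh}`. -/
noncomputable def wnorm (N1 N2 : Set ℕ) (σ : List (Finset ℕ × ℕ) → ℕ)
    (x : ℕ →₀ ℝ) : ℝ :=
  sSup {r | ∃ f, DWh N1 N2 σ f ∧ r = dotp f x}

/-!
Restricting a functional `f ∈ D_wh` to pairwise disjoint sets `S_k` splits it as
`f|S_k = ρ_k g_k` with `g_k ∈ D_wh` of the same weight and `∑ ρ_k² ≤ 1`; this goes by induction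
on `D_wh`, the even operations surviving because minima of supports only move to the right and
the modified Schreier families are spreading and hereditary.

For a block `x_k`, only the `f_ℓ` whose restriction to `supp x_k` is nonzero contribute. Their
minima lie below `min supp x_k` (this is the minimum-free hypothesis) and are distinct, so there
are at most `min supp x_k` of them and `(1/2) ∑_ℓ (λ_ℓ ρ_ℓk / τ_k) g_ℓk` is an `S_1`-allowable
element of `D_wh`, where `τ_k = (∑_ℓ (λ_ℓ ρ_ℓk)²)^{1/2}`. Hence block `k` contributes at most
`2 C |b_k| τ_k`, and since `∑_k τ_k² ≤ 1`, Cauchy–Schwarz over `k` gives `2 C ‖b‖₂ ≤ 4 C ‖b‖₂`.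
-/

open Finset Function

lemma two_le_mseq (j : ℕ) : 2 ≤ mseq j := by
  induction j using Nat.twoStepInduction with
  | zero | one => exact le_rfl
  | more n _ ih => exact ih.trans (Nat.le_self_pow (by norm_num) _)

lemma one_le_mseq (j : ℕ) : (1 : ℝ) ≤ mseq j := by
  exact_mod_cast (two_le_mseq j).trans' (by norm_num)

lemma finMin_mem {F : Finset ℕ} (h : F.Nonempty) : finMin F ∈ F := Nat.sInf_mem h

lemma finMin_le {F : Finset ℕ} {n : ℕ} (h : n ∈ F) : finMin F ≤ n := Nat.sInf_le h

lemma finMin_injOn {ι : Type*} {s : Finset ι} {F : ι → Finset ℕ} (hne : ∀ i ∈ s, (F i).Nonempty)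
    (hd : (s : Set ι).PairwiseDisjoint F) : Set.InjOn (fun i => finMin (F i)) s := by
  intro i hi i' hi' h
  by_contra hii
  have hmem : finMin (F i) ∈ F i' := by
    simpa [h] using finMin_mem (hne i' hi')
  exact disjoint_left.mp (hd hi hi' hii) (finMin_mem (hne i hi)) hmem

lemma minsupp_eq_finMin (f : ℕ →₀ ℝ) : minsupp f = finMin f.support := by
  simp [minsupp, finMin]

lemma minsupp_mem {f : ℕ →₀ ℝ} (h : f ≠ 0) : minsupp f ∈ f.support := by
  rw [minsupp_eq_finMin]
  exact finMin_mem (Finsupp.support_nonempty_iff.mpr h)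

lemma minsupp_le {f : ℕ →₀ ℝ} {n : ℕ} (h : n ∈ f.support) : minsupp f ≤ n := by
  rw [minsupp_eq_finMin]
  exact finMin_le h

lemma minsupp_le_minsupp_of_support_subset {f g : ℕ →₀ ℝ} (hg : g ≠ 0) (h : g.support ⊆ f.support) :
    minsupp f ≤ minsupp g :=
  minsupp_le (h (minsupp_mem hg))

lemma le_maxsupp {f : ℕ →₀ ℝ} {n : ℕ} (h : n ∈ f.support) : n ≤ maxsupp f := by
  refine le_csSup ⟨f.support.max' ⟨n, h⟩, fun k hk => ?_⟩ (Finsupp.mem_support_iff.mp h)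
  exact le_max' _ _ (Finsupp.mem_support_iff.mpr hk)

lemma minsupp_injOn {ι : Type*} {s : Finset ι} {f : ι → ℕ →₀ ℝ} (hne : ∀ i ∈ s, f i ≠ 0)
    (hd : (s : Set ι).PairwiseDisjoint fun i => (f i).support) :
    Set.InjOn (fun i => minsupp (f i)) s := by
  simp only [minsupp_eq_finMin]
  exact finMin_injOn (fun i hi => Finsupp.support_nonempty_iff.mpr (hne i hi)) hd

lemma pairwise_disjoint_of_lt {ι : Type*} [LinearOrder ι] {S : ι → Finset ℕ}
    (h : ∀ k k' : ι, k < k' → ∀ a ∈ S k, ∀ b ∈ S k', a < b) : Pairwise (Disjoint on S) :=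
  (pairwise_disjoint_on S).mpr fun k k' hkk =>
    disjoint_left.mpr fun a ha ha' => lt_irrefl a (h k k' hkk a ha a ha')

lemma sum_equivFin_symm {ι M : Type*} [AddCommMonoid M] (I : Finset ι) (h : ι → M) :
    ∑ t, h (I.equivFin.symm t) = ∑ i ∈ I, h i := by
  rw [← sum_coe_sort I h]
  exact I.equivFin.symm.sum_comp fun i => h i

lemma image_equivFin_symm {ι : Type*} (I : Finset ι) (h : ι → ℕ) :
    univ.image (fun t => h (I.equivFin.symm t)) = I.image h := by
  ext v
  simp only [mem_image, mem_univ, true_and]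
  exact ⟨fun ⟨t, ht⟩ => ⟨_, (I.equivFin.symm t).2, ht⟩,
    fun ⟨i, hi, hv⟩ => ⟨I.equivFin ⟨i, hi⟩, by simpa using hv⟩⟩

lemma card_image_le_card_of_injOn {ι : Type*} {s : Finset ι} {a b : ι → ℕ} {F : Finset ℕ}
    (ha : Set.InjOn a s) (haF : ∀ i ∈ s, a i ∈ F) : (s.image b).card ≤ F.card :=
  calc (s.image b).card ≤ s.card := card_image_le
    _ = (s.image a).card := (card_image_of_injOn ha).symm
    _ ≤ F.card := card_le_card (image_subset_iff.mpr haF)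

lemma image_mem_schreierOne_of_le {ι : Type*} {F : Finset ℕ} (hF : F ∈ SchreierOne)
    {s : Finset ι} {a b : ι → ℕ} (ha : Set.InjOn a s) (haF : ∀ i ∈ s, a i ∈ F)
    (hab : ∀ i ∈ s, a i ≤ b i) : s.image b ∈ SchreierOne := by
  intro v hv
  obtain ⟨i, hi, rfl⟩ := mem_image.mp hv
  exact (card_image_le_card_of_injOn ha haF).trans ((hF _ (haF i hi)).trans (hab i hi))

lemma image_mem_schreierOne_of_lt {ι : Type*} {s : Finset ι} {a b : ι → ℕ} {m : ℕ}
    (ha : Set.InjOn a s) (ham : ∀ i ∈ s, a i < m) (hmb : ∀ i ∈ s, m ≤ b i) :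
    s.image b ∈ SchreierOne := by
  intro v hv
  obtain ⟨i, hi, rfl⟩ := mem_image.mp hv
  calc (s.image b).card ≤ (range m).card :=
        card_image_le_card_of_injOn ha fun i hi => mem_range.mpr (ham i hi)
    _ = m := card_range m
    _ ≤ b i := hmb i hi

lemma mem_mconv_of_pairwise_disjoint {P Q : Set (Finset ℕ)} {κ : Type*} [Fintype κ]
    (G : κ → Finset ℕ) (hQ : ∀ t, (G t).Nonempty → G t ∈ Q) (hd : Pairwise (Disjoint on G))
    (hP : (univ.filter fun t => (G t).Nonempty).image (fun t => finMin (G t)) ∈ P) :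
    univ.biUnion G ∈ mconv P Q := by
  set J := univ.filter fun t => (G t).Nonempty
  set e := J.equivFin.symm
  have hne : ∀ t, (G (e t)).Nonempty := fun t => (mem_filter.mp (e t).2).2
  refine ⟨J.card, fun t => G (e t), fun t => hQ _ (hne t), hne,
    fun t t' htt' => hd fun h => htt' (e.injective (Subtype.ext h)), ?_, ?_⟩
  · exact (image_equivFin_symm J fun t => finMin (G t)) ▸ hP
  · ext v
    simp only [mem_biUnion, mem_univ, true_and]
    refine ⟨fun ⟨t, ht⟩ => ⟨e.symm ⟨t, mem_filter.mpr ⟨mem_univ t, v, ht⟩⟩, by simpa using ht⟩,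
      fun ⟨t, ht⟩ => ⟨e t, ht⟩⟩

lemma biUnion_image_filter {ι κ : Type*} [Fintype κ] (F : κ → Finset ℕ) {s : Finset ι}
    {a : ι → ℕ} (b : ι → ℕ) (h : ∀ i ∈ s, ∃ t, a i ∈ F t) :
    univ.biUnion (fun t => (s.filter (a · ∈ F t)).image b) = s.image b := by
  ext v
  simp only [mem_biUnion, mem_univ, true_and, mem_image, mem_filter]
  constructor
  · rintro ⟨t, i, ⟨hi, -⟩, rfl⟩
    exact ⟨i, hi, rfl⟩
  · rintro ⟨i, hi, rfl⟩
    obtain ⟨t, ht⟩ := h i hi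
    exact ⟨t, i, ⟨hi, ht⟩, rfl⟩

theorem image_mem_schreierM_of_le {ι : Type*} {n : ℕ} {F : Finset ℕ} (hF : F ∈ SchreierM n)
    {s : Finset ι} {a b : ι → ℕ} (ha : Set.InjOn a s) (hb : Set.InjOn b s)
    (haF : ∀ i ∈ s, a i ∈ F) (hab : ∀ i ∈ s, a i ≤ b i) : s.image b ∈ SchreierM n := by
  induction n using Nat.twoStepInduction generalizing F s with
  | zero => exact (card_image_le_card_of_injOn ha haF).trans hF
  | one => exact image_mem_schreierOne_of_le hF ha haF hab
  | more n _ ih =>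
    obtain ⟨d, Ft, hQ, hne, hdisj, hmin, rfl⟩ := hF
    set G : Fin d → Finset ℕ := fun t => (s.filter (a · ∈ Ft t)).image b
    have hGd : Pairwise (Disjoint on G) := by
      intro t t' htt'
      simp only [onFun, G, disjoint_left, mem_image, mem_filter, not_exists, not_and]
      rintro v ⟨i, ⟨hi, hit⟩, rfl⟩ i' ⟨hi', hit'⟩ hbi
      rw [hb hi' hi hbi] at hit'
      exact disjoint_left.mp (hdisj t t' htt') hit hit'
    have hFinj : Set.InjOn (fun t => finMin (Ft t)) (univ.filter fun t => (G t).Nonempty) :=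
      (finMin_injOn (s := univ) (fun t _ => hne t) fun t _ t' _ h => hdisj t t' h).mono
        (coe_subset.mpr (subset_univ _))
    rw [← biUnion_image_filter Ft b fun i hi => by simpa using haF i hi]
    refine mem_mconv_of_pairwise_disjoint G
      (fun t _ => ih (hQ t) (ha.mono ?_) (hb.mono ?_) ?_ ?_) hGd
      (image_mem_schreierOne_of_le hmin hFinj (fun t _ => mem_image_of_mem _ (mem_univ t)) ?_)
    · exact coe_subset.mpr (filter_subset _ _)
    · exact coe_subset.mpr (filter_subset _ _)
    · exact fun i hi => (mem_filter.mp hi).2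
    · exact fun i hi => hab i (mem_filter.mp hi).1
    · intro t ht
      obtain ⟨i, hi, hbi⟩ := mem_image.mp (finMin_mem (mem_filter.mp ht).2)
      calc finMin (Ft t) ≤ a i := finMin_le (mem_filter.mp hi).2
        _ ≤ b i := hab i (mem_filter.mp hi).1
        _ = finMin (G t) := hbi

lemma dotp_eq_linearCombination (f x : ℕ →₀ ℝ) :
    dotp f x = Finsupp.linearCombination ℝ x f := by
  simp [dotp, Finsupp.linearCombination_apply]

lemma dotp_eq_sum_of_support_subset {f x : ℕ →₀ ℝ} {s : Finset ℕ} (h : f.support ⊆ s) :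
    dotp f x = ∑ n ∈ s, f n * x n :=
  Finsupp.sum_of_support_subset f h _ fun _ _ => zero_mul _

lemma dotp_comm (f x : ℕ →₀ ℝ) : dotp f x = dotp x f := by
  rw [dotp_eq_sum_of_support_subset (subset_union_left (s₂ := x.support)),
    dotp_eq_sum_of_support_subset (subset_union_right (s₁ := f.support))]
  simp_rw [mul_comm]

lemma dotp_smul_left (c : ℝ) (f x : ℕ →₀ ℝ) : dotp (c • f) x = c * dotp f x := by
  simp_rw [dotp_eq_linearCombination, map_smul, smul_eq_mul]

lemma dotp_sum_left {ι : Type*} (s : Finset ι) (f : ι → ℕ →₀ ℝ) (x : ℕ →₀ ℝ) :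
    dotp (∑ i ∈ s, f i) x = ∑ i ∈ s, dotp (f i) x := by
  simp_rw [dotp_eq_linearCombination, map_sum]

lemma dotp_sum_smul_right {ι : Type*} (s : Finset ι) (f : ℕ →₀ ℝ) (b : ι → ℝ)
    (x : ι → ℕ →₀ ℝ) : dotp f (∑ k ∈ s, b k • x k) = ∑ k ∈ s, b k * dotp f (x k) := by
  simp_rw [dotp_comm f, dotp_sum_left, dotp_smul_left]

lemma dotp_filter_mem_support (f x : ℕ →₀ ℝ) :
    dotp (f.filter (· ∈ x.support)) x = dotp f x := by
  rw [dotp_comm, dotp_comm f, dotp_eq_sum_of_support_subset subset_rfl,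
    dotp_eq_sum_of_support_subset subset_rfl]
  exact sum_congr rfl fun n hn => by rw [Finsupp.filter_apply_pos _ _ hn]

lemma dotp_le_sum_abs {f x : ℕ →₀ ℝ} (hf : ∀ n, |f n| ≤ 1) :
    dotp f x ≤ ∑ n ∈ x.support, |x n| := by
  rw [dotp_comm, dotp_eq_sum_of_support_subset subset_rfl]
  refine sum_le_sum fun n _ => (le_abs_self _).trans ?_
  rw [abs_mul]
  exact mul_le_of_le_one_right (abs_nonneg _) (hf n)

lemma sum_smul_eq_sqrt_smul {ι E : Type*} [Fintype ι] [AddCommGroup E] [Module ℝ E]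
    (a : ι → ℝ) (v : ι → E) :
    ∑ i, a i • v i = √(∑ j, a j ^ 2) • ∑ i, (a i / √(∑ j, a j ^ 2)) • v i := by
  by_cases h : √(∑ j, a j ^ 2) = 0
  · have ha : ∀ i, a i = 0 := by
      have := (sum_eq_zero_iff_of_nonneg fun j _ => sq_nonneg (a j)).mp
        (Real.sqrt_eq_zero (sum_nonneg fun j _ => sq_nonneg (a j)) |>.mp h)
      exact fun i => pow_eq_zero_iff two_ne_zero |>.mp (this i (mem_univ i))
    simp [ha]
  · rw [smul_sum]
    simp_rw [smul_smul, mul_div_cancel₀ _ h]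

lemma sqrt_sum_mul_sq {ι : Type*} [Fintype ι] (c : ℝ) (a : ι → ℝ) :
    √(∑ i, (c * a i) ^ 2) = |c| * √(∑ i, a i ^ 2) := by
  simp_rw [mul_pow, ← mul_sum]
  rw [Real.sqrt_mul (sq_nonneg c), Real.sqrt_sq_eq_abs]

lemma sum_div_sqrt_sum_sq_le_one {ι : Type*} [Fintype ι] (a : ι → ℝ) :
    ∑ i, (a i / √(∑ j, a j ^ 2)) ^ 2 ≤ 1 := by
  simp_rw [div_pow]
  rw [← sum_div, Real.sq_sqrt (sum_nonneg fun j _ => sq_nonneg (a j))]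
  exact div_self_le_one _

lemma sum_sum_mul_sq_le_one {ι κ : Type*} [Fintype ι] [Fintype κ] {lam : ι → ℝ}
    {ρ : ι → κ → ℝ} (hlam : ∑ i, lam i ^ 2 ≤ 1) (hρ : ∀ i, ∑ k, ρ i k ^ 2 ≤ 1) :
    ∑ k, ∑ i, (lam i * ρ i k) ^ 2 ≤ 1 := by
  rw [sum_comm]
  refine (sum_le_sum fun i _ => ?_).trans hlam
  simp_rw [mul_pow, ← mul_sum]
  exact mul_le_of_le_one_right (sq_nonneg _) (hρ i)

lemma sum_mul_le_of_le_abs_mul {κ : Type*} [Fintype κ] {b T τ : κ → ℝ} {M : ℝ} (hM : 0 ≤ M)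
    (hT : ∀ k, b k * T k ≤ |b k| * τ k * M) (hτ : ∑ k, τ k ^ 2 ≤ 1) :
    ∑ k, b k * T k ≤ M * √(∑ k, b k ^ 2) :=
  calc ∑ k, b k * T k ≤ (∑ k, |b k| * τ k) * M := by
        rw [sum_mul]
        exact sum_le_sum fun k _ => hT k
    _ ≤ (√(∑ k, |b k| ^ 2) * √(∑ k, τ k ^ 2)) * M := by
        gcongr
        exact Real.sum_mul_le_sqrt_mul_sqrt _ _ _
    _ ≤ M * √(∑ k, b k ^ 2) := by
        simp_rw [sq_abs]
        rw [mul_comm]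
        gcongr
        exact mul_le_of_le_one_right (Real.sqrt_nonneg _) (Real.sqrt_le_one.mpr hτ)

lemma abs_smul_sum_apply_le_one {ι : Type*} [Fintype ι] {m : ℝ} (hm : 1 ≤ m) {lam : ι → ℝ}
    (hlam : ∑ i, lam i ^ 2 ≤ 1) {f : ι → ℕ →₀ ℝ} (hf : ∀ i n, |f i n| ≤ 1)
    (hd : Pairwise (Disjoint on fun i => (f i).support)) (n : ℕ) :
    |(m⁻¹ • ∑ i, lam i • f i) n| ≤ 1 := by
  simp only [Finsupp.smul_apply, Finsupp.finsetSum_apply, smul_eq_mul]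
  rw [abs_mul, abs_inv, abs_of_pos (one_pos.trans_le hm)]
  refine mul_le_one₀ (inv_le_one_of_one_le₀ hm) (abs_nonneg _) ?_
  by_cases hn : ∃ i, f i n ≠ 0
  · obtain ⟨i, hi⟩ := hn
    rw [sum_eq_single i (fun i' _ hi' => ?_) (by simp), abs_mul]
    · have hlami : |lam i| ≤ 1 := (sq_le_one_iff_abs_le_one _).mp
        ((single_le_sum (fun j _ => sq_nonneg (lam j)) (mem_univ i)).trans hlam)
      exact mul_le_one₀ hlami (abs_nonneg _) (hf i n)
    · have : f i' n = 0 := Finsupp.notMem_support_iff.mp fun h =>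
        disjoint_left.mp (hd hi') h (Finsupp.mem_support_iff.mpr hi)
      rw [this, mul_zero]
  · simp only [not_exists, not_not] at hn
    simp [hn]

lemma IsSpecial.pairwise_disjoint {N1 N2 : Set ℕ} {σ : List (Finset ℕ × ℕ) → ℕ} {p : ℕ}
    {E : Fin p → Finset ℕ} {js : Fin p → ℕ}
    (h : IsSpecial N1 N2 σ (List.ofFn fun i => (E i, js i))) : Pairwise (Disjoint on E) :=
  (pairwise_disjoint_on E).mpr fun _ _ hii => List.pairwise_ofFn.mp h.1.2.1 hii

namespace DW

variable {N1 N2 : Set ℕ} {σ : List (Finset ℕ × ℕ) → ℕ}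

lemma abs_apply_le_one {f : ℕ →₀ ℝ} {w : ℕ} (hf : DW N1 N2 σ f w) (n : ℕ) : |f n| ≤ 1 := by
  induction hf generalizing n with
  | pos k | neg k => rw [Finsupp.single_apply]; split_ifs <;> simp
  | even j p f _ lam _ hdisj _ hlam ih =>
    exact abs_smul_sum_apply_le_one (one_le_mseq _) hlam ih (fun i i' h => hdisj i i' h) n
  | odd j p f E js lam _ hsupp hspec _ _ hlam ih =>
    refine abs_smul_sum_apply_le_one (one_le_mseq _) hlam ih (fun i i' h => ?_) n
    exact (hspec.pairwise_disjoint h).mono (hsupp i) (hsupp i')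

lemma dotp_le_wnorm {f : ℕ →₀ ℝ} {w : ℕ} (hf : DW N1 N2 σ f w) (x : ℕ →₀ ℝ) :
    dotp f x ≤ wnorm N1 N2 σ x := by
  refine le_csSup ⟨∑ n ∈ x.support, |x n|, ?_⟩ ⟨f, ⟨w, hf⟩, rfl⟩
  rintro _ ⟨g, ⟨_, hg⟩, rfl⟩
  exact dotp_le_sum_abs hg.abs_apply_le_one

lemma smul_sum_even {ι : Type*} [Fintype ι] (j : ℕ) {g : ι → ℕ →₀ ℝ} {w : ι → ℕ} {c : ι → ℝ}
    (hg : ∀ i, DW N1 N2 σ (g i) (w i)) (hd : Pairwise (Disjoint on fun i => (g i).support))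
    (hallow : (univ.filter fun i => c i • g i ≠ 0).image (fun i => minsupp (g i)) ∈
      SchreierM (nseq (2 * j)))
    (hc : ∑ i, c i ^ 2 ≤ 1) :
    DW N1 N2 σ (((mseq (2 * j) : ℕ) : ℝ)⁻¹ • ∑ i, c i • g i) (mseq (2 * j)) := by
  set I := univ.filter fun i => c i • g i ≠ 0
  set e := I.equivFin.symm
  rw [← sum_filter_ne_zero, ← sum_equivFin_symm]
  refine DW.even j I.card (fun t => g (e t)) (fun t => w (e t)) (fun t => c (e t))
    (fun t => hg _) (fun t t' htt' => hd fun h => htt' (e.injective (Subtype.ext h)))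
    ((image_equivFin_symm I fun i => minsupp (g i)) ▸ hallow) ?_
  rw [sum_equivFin_symm I fun i => c i ^ 2]
  exact (sum_le_sum_of_subset_of_nonneg (subset_univ I) fun i _ _ => sq_nonneg _).trans hc

end DW

def SplitsOver (N1 N2 : Set ℕ) (σ : List (Finset ℕ × ℕ) → ℕ) {κ : Type*} [Fintype κ]
    (S : κ → Finset ℕ) (f : ℕ →₀ ℝ) (w : ℕ) : Prop :=
  ∃ ρ : κ → ℝ, ∑ k, ρ k ^ 2 ≤ 1 ∧
    ∀ k, ∃ g, DW N1 N2 σ g w ∧ g.support ⊆ f.support ∧ f.filter (· ∈ S k) = ρ k • g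

section Splitting

variable {N1 N2 : Set ℕ} {σ : List (Finset ℕ × ℕ) → ℕ} {κ : Type*} [Fintype κ]

lemma splitsOver_single {S : κ → Finset ℕ} (hS : Pairwise (Disjoint on S)) {n w : ℕ} {a : ℝ}
    (hf : DW N1 N2 σ (Finsupp.single n a) w) : SplitsOver N1 N2 σ S (Finsupp.single n a) w := by
  refine ⟨fun k => if n ∈ S k then 1 else 0, ?_, fun k => ⟨_, hf, subset_rfl, ?_⟩⟩
  · simp only [ite_pow, one_pow, zero_pow two_ne_zero, sum_boole, Nat.cast_le_one]
    exact card_le_one.mpr fun k hk k' hk' => by_contra fun hkk =>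
      disjoint_left.mp (hS hkk) (mem_filter.mp hk).2 (mem_filter.mp hk').2
  · by_cases hn : n ∈ S k
    · simp [hn, Finsupp.filter_single_of_pos]
    · simp [hn, Finsupp.filter_single_of_neg]

lemma splitsOver_smul_sum {ι : Type*} [Fintype ι] {S : κ → Finset ℕ} {m : ℝ} {lam : ι → ℝ}
    (hlam : ∑ i, lam i ^ 2 ≤ 1) {f : ι → ℕ →₀ ℝ} {w : ι → ℕ} {w' : ℕ}
    (hf : ∀ i, SplitsOver N1 N2 σ S (f i) (w i))
    (hclosed : ∀ (g : ι → ℕ →₀ ℝ) (c : ι → ℝ), (∀ i, DW N1 N2 σ (g i) (w i)) →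
      (∀ i, (g i).support ⊆ (f i).support) → ∑ i, c i ^ 2 ≤ 1 →
      DW N1 N2 σ (m⁻¹ • ∑ i, c i • g i) w') :
    SplitsOver N1 N2 σ S (m⁻¹ • ∑ i, lam i • f i) w' := by
  choose ρ hρ hsplit using hf
  choose g hg hgf hfg using hsplit
  set τ : κ → ℝ := fun k => √(∑ i, (lam i * ρ i k) ^ 2)
  refine ⟨τ, ?_, fun k => ⟨m⁻¹ • ∑ i, (lam i * ρ i k / τ k) • g i k,
    hclosed _ _ (hg · k) (hgf · k) (sum_div_sqrt_sum_sq_le_one _), ?_⟩⟩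
  · simp_rw [τ, Real.sq_sqrt (sum_nonneg fun i _ => sq_nonneg _)]
    exact sum_sum_mul_sq_le_one hlam hρ
  have hfilter : (m⁻¹ • ∑ i, lam i • f i).filter (· ∈ S k) =
      τ k • m⁻¹ • ∑ i, (lam i * ρ i k / τ k) • g i k := by
    simp_rw [Finsupp.filter_smul, Finsupp.filter_sum, Finsupp.filter_smul, hfg, smul_smul]
    rw [sum_smul_eq_sqrt_smul, smul_smul, mul_comm]
  refine ⟨?_, hfilter⟩
  by_cases hτ : τ k = 0
  · simp [hτ] -- every coefficient is then a division by `0`, i.e. `0`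
  · rw [← Finsupp.support_smul_eq hτ, ← hfilter, Finsupp.support_filter]
    exact filter_subset _ _

theorem DW.splitsOver {f : ℕ →₀ ℝ} {w : ℕ} (hf : DW N1 N2 σ f w) {S : κ → Finset ℕ}
    (hS : Pairwise (Disjoint on S)) : SplitsOver N1 N2 σ S f w := by
  induction hf with
  | pos n => exact splitsOver_single hS (DW.pos n)
  | neg n => exact splitsOver_single hS (DW.neg n)
  | even j p f _ lam _ hdisj hallow hlam ih =>
    refine splitsOver_smul_sum hlam ih fun g c hg hgf hc => DW.smul_sum_even j hg
      (fun i i' h => (hdisj i i' h).mono (hgf i) (hgf i')) ?_ hc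
    have hg0 : ∀ i ∈ univ.filter fun i => c i • g i ≠ 0, g i ≠ 0 :=
      fun i hi h => (mem_filter.mp hi).2 (by rw [h, smul_zero])
    refine image_mem_schreierM_of_le hallow (a := fun i => minsupp (f i))
      (minsupp_injOn (fun i hi h => hg0 i hi (by simpa [h] using hgf i))
        fun i _ i' _ h => hdisj i i' h)
      (minsupp_injOn hg0 fun i _ i' _ h => (hdisj i i' h).mono (hgf i) (hgf i'))
      (fun i _ => mem_image_of_mem _ (mem_univ i))
      (fun i hi => minsupp_le_minsupp_of_support_subset (hg0 i hi) (hgf i))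
  | odd j p f E js lam _ hsupp hspec hallow hbig hlam ih =>
    exact splitsOver_smul_sum hlam ih fun g c hg hgf hc =>
      DW.odd j p g E js c hg (fun i => (hgf i).trans (hsupp i)) hspec hallow hbig hc

end Splitting

lemma image_minsupp_mem_schreierOne_of_minsupp_notMem {ι : Type*} {s : Finset ι}
    {x : ℕ →₀ ℝ} {f g : ι → ℕ →₀ ℝ} (hg : ∀ l ∈ s, g l ≠ 0 ∧ (g l).support ⊆ x.support)
    (hgf : ∀ l, (g l).support ⊆ (f l).support) (hd : Pairwise (Disjoint on fun l => (f l).support))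
    (hfree : ∀ l, minsupp (f l) ∉ Icc (minsupp x) (maxsupp x)) :
    s.image (fun l => minsupp (g l)) ∈ SchreierOne := by
  refine image_mem_schreierOne_of_lt (a := fun l => minsupp (f l)) (m := minsupp x)
    (minsupp_injOn (fun l hl h => (hg l hl).1 (by simpa [h] using hgf l))
      fun l _ l' _ h => hd h) (fun l hl => ?_)
    (fun l hl => minsupp_le_minsupp_of_support_subset (hg l hl).1 (hg l hl).2)
  obtain ⟨hg0, hgx⟩ := hg l hl
  have hmx : minsupp (g l) ≤ maxsupp x := le_maxsupp (hgx (minsupp_mem hg0))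
  have hfg : minsupp (f l) ≤ minsupp (g l) := minsupp_le_minsupp_of_support_subset hg0 (hgf l)
  by_contra hlt
  exact hfree l (mem_Icc.mpr ⟨not_lt.mp hlt, hfg.trans hmx⟩)

section MinimumFree

variable {N1 N2 : Set ℕ} {σ : List (Finset ℕ × ℕ) → ℕ}

lemma mul_sum_mul_dotp_le_of_minsupp_notMem {ι : Type*} [Fintype ι] {x : ℕ →₀ ℝ}
    {f g : ι → ℕ →₀ ℝ} {ρ : ι → ℝ} {w : ι → ℕ}
    (hg : ∀ l, DW N1 N2 σ (g l) (w l)) (hgf : ∀ l, (g l).support ⊆ (f l).support)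
    (hfg : ∀ l, (f l).filter (· ∈ x.support) = ρ l • g l)
    (hd : Pairwise (Disjoint on fun l => (f l).support))
    (hfree : ∀ l, minsupp (f l) ∉ Icc (minsupp x) (maxsupp x)) (b : ℝ) (lam : ι → ℝ) :
    b * ∑ l, lam l * dotp (f l) x ≤
      |b| * √(∑ l, (lam l * ρ l) ^ 2) * (2 * wnorm N1 N2 σ x) := by
  set τ := √(∑ l, (b * lam l * ρ l) ^ 2)
  set c : ι → ℝ := fun l => b * lam l * ρ l / τ
  have hsum : b * ∑ l, lam l * dotp (f l) x = τ * (2 * dotp ((2 : ℝ)⁻¹ • ∑ l, c l • g l) x) := by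
    have hdot : ∀ l, dotp (f l) x = ρ l * dotp (g l) x := fun l => by
      rw [← dotp_filter_mem_support, hfg, dotp_smul_left]
    calc b * ∑ l, lam l * dotp (f l) x = dotp (∑ l, (b * lam l * ρ l) • g l) x := by
          simp only [mul_sum, dotp_sum_left, dotp_smul_left, hdot, mul_assoc]
      _ = dotp (τ • ∑ l, c l • g l) x := by rw [sum_smul_eq_sqrt_smul]
      _ = τ * (2 * dotp ((2 : ℝ)⁻¹ • ∑ l, c l • g l) x) := by
          rw [dotp_smul_left, dotp_smul_left]
          ring
  have hτ : τ = |b| * √(∑ l, (lam l * ρ l) ^ 2) := by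
    simp_rw [τ, mul_assoc]
    exact sqrt_sum_mul_sq b _
  have hsupp : ∀ l ∈ univ.filter fun l => c l • g l ≠ 0,
      g l ≠ 0 ∧ (g l).support ⊆ x.support := by
    intro l hl
    have hcg := (mem_filter.mp hl).2
    have hρ : ρ l ≠ 0 := fun h => hcg (by simp [c, h])
    refine ⟨fun h => hcg (by rw [h, smul_zero]), ?_⟩
    rw [← Finsupp.support_smul_eq hρ, ← hfg, Finsupp.support_filter]
    exact fun n hn => (mem_filter.mp hn).2
  have hallow : (univ.filter fun l => c l • g l ≠ 0).image (fun l => minsupp (g l)) ∈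
      SchreierM (nseq (2 * 0)) :=
    image_minsupp_mem_schreierOne_of_minsupp_notMem hsupp hgf hd hfree
  have hmem := DW.smul_sum_even 0 hg
    (fun l l' h => (hd h).mono (hgf l) (hgf l')) hallow (sum_div_sqrt_sum_sq_le_one _)
  have hm0 : ((mseq (2 * 0) : ℕ) : ℝ) = 2 := by norm_num [mseq]
  rw [hm0] at hmem
  rw [hsum, ← hτ]
  exact mul_le_mul_of_nonneg_left (by linarith [hmem.dotp_le_wnorm x]) (Real.sqrt_nonneg _)

end MinimumFree

theorem minimum_free_estimate_general (N1 N2 : Set ℕ) (σ : List (Finset ℕ × ℕ) → ℕ)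
    (C : ℝ) (hC : 0 < C)
    (d : ℕ) (x : Fin d → ℕ →₀ ℝ)
    (hblock : ∀ k k' : Fin d, k < k' →
      ∀ a ∈ (x k).support, ∀ b ∈ (x k').support, a < b)
    (hxnorm : ∀ k, wnorm N1 N2 σ (x k) ≤ C)
    (p : ℕ) (fl : Fin p → ℕ →₀ ℝ)
    (hD : ∀ l, DWh N1 N2 σ (fl l))
    (hdisj : ∀ l l', l ≠ l' → Disjoint (fl l).support (fl l').support)
    (hfree : ∀ (l : Fin p) (k : Fin d),
      minsupp (fl l) ∉ Finset.Icc (minsupp (x k)) (maxsupp (x k)))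
    (lam : Fin p → ℝ) (hlam : (∑ l, (lam l) ^ 2) ≤ 1)
    (b : Fin d → ℝ) :
    (∑ l, lam l * dotp (fl l) (∑ k, b k • x k))
      ≤ 4 * C * Real.sqrt (∑ k, (b k) ^ 2) := by
  choose w hw using hD
  choose ρ hρ g hg hgf hfg using fun l => (hw l).splitsOver (pairwise_disjoint_of_lt hblock)
  set τ : Fin d → ℝ := fun k => √(∑ l, (lam l * ρ l k) ^ 2)
  have hblock_le : ∀ k, b k * ∑ l, lam l * dotp (fl l) (x k) ≤ |b k| * τ k * (2 * C) :=
    fun k => (mul_sum_mul_dotp_le_of_minsupp_notMem (hg · k) (hgf · k) (hfg · k)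
      (fun l l' h => hdisj l l' h) (hfree · k) (b k) lam).trans
        (by gcongr; exact hxnorm k)
  have hτ : ∑ k, τ k ^ 2 ≤ 1 := by
    simp_rw [τ, Real.sq_sqrt (sum_nonneg fun l _ => sq_nonneg _)]
    exact sum_sum_mul_sq_le_one hlam hρ
  calc ∑ l, lam l * dotp (fl l) (∑ k, b k • x k)
      = ∑ k, b k * ∑ l, lam l * dotp (fl l) (x k) := by
        simp_rw [dotp_sum_smul_right, mul_sum]
        rw [sum_comm]
        simp_rw [mul_left_comm]
    _ ≤ 2 * C * √(∑ k, b k ^ 2) := sum_mul_le_of_le_abs_mul (by positivity) hblock_le hτ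
    _ ≤ 4 * C * √(∑ k, b k ^ 2) := by gcongr; norm_num

/-- **Minimum Free Estimate.** Let `(f_ℓ)_{ℓ=1}^p ⊆ D_wh` have pairwise
disjoint supports and `(x_k)_{k=1}^d` be a block sequence in `X_wh` with `‖x_k‖ ≤ C`,
such that `min supp f_ℓ ∉ ran x_k` for all `ℓ, k` (where `ran x` is the smallest interval
containing `supp x`).  Then for every `(λ_ℓ)` in the unit ball of `ℓ_2` and all scalars
`(b_k)`: `∑_ℓ λ_ℓ f_ℓ(∑_k b_k x_k) ≤ 4C (∑_k b_k^2)^{1/2}`. -/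
theorem minimum_free_estimate (N1 N2 : Set ℕ) (σ : List (Finset ℕ × ℕ) → ℕ)
    (hN : N1 ∪ N2 = Set.univ) (hN1 : N1.Infinite) (hN2 : N2.Infinite)
    (hσ : GoodCoding N1 N2 σ)
    (C : ℝ) (hC : 0 < C)
    (d : ℕ) (x : Fin d → ℕ →₀ ℝ)
    (hne : ∀ k, (x k).support.Nonempty)
    (hblock : ∀ k k' : Fin d, k < k' →
      ∀ a ∈ (x k).support, ∀ b ∈ (x k').support, a < b)
    (hxnorm : ∀ k, wnorm N1 N2 σ (x k) ≤ C)
    (p : ℕ) (fl : Fin p → ℕ →₀ ℝ)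
    (hD : ∀ l, DWh N1 N2 σ (fl l))
    (hdisj : ∀ l l', l ≠ l' → Disjoint (fl l).support (fl l').support)
    (hfree : ∀ (l : Fin p) (k : Fin d),
      minsupp (fl l) ∉ Finset.Icc (minsupp (x k)) (maxsupp (x k)))
    (lam : Fin p → ℝ) (hlam : (∑ l, (lam l) ^ 2) ≤ 1)
    (b : Fin d → ℝ) :
    (∑ l, lam l * dotp (fl l) (∑ k, b k • x k))
      ≤ 4 * C * Real.sqrt (∑ k, (b k) ^ 2) :=
  minimum_free_estimate_general N1 N2 σ C hC d x hblock hxnorm p fl hD hdisj hfree lam hlam b
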